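/- Let I be an ideal of kQ such that I = φ(I_0) for some φ ∈ T, and let ψ ∈ T satisfy: (1) ψ(I_0) = I; (2) for every bypass (β,v) with v ∈ supp(ψ(β)) and every τ ∈ k^*, φ_{β,v,τ}(I_0) ≠ I_0. Then for every bypass (α,u), if u ∈ supp(ψ(α)) then α ∼_I u, where ∼_I is the homotopy relation of (Q,I). -/

import Mathlib

attribute [local instance] Classical.propDecidable

/-- A quiver given by a set of vertices, a set of arrows and source/target maps. -/
structure Quiv where
  V : Type
  A : Type
  s : A → V
  t : A → V

namespace Quiv

section Basic

variable (Q : Quiv)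

/-- A (nontrivial) path is a nonempty list of composable arrows, listed in the
order they are traversed. -/
def IsPath (p : List Q.A) : Prop :=
  p ≠ [] ∧ p.Chain' (fun a b => Q.t a = Q.s b)

/-- Source of a nonempty list of arrows. -/
def src (p : List Q.A) : Option Q.V := p.head?.map Q.s

/-- Target of a nonempty list of arrows. -/
def tgt (p : List Q.A) : Option Q.V := p.getLast?.map Q.t

/-- `Q` has no oriented cycle: no nontrivial path has equal source and target. -/
def NoCycle : Prop := ∀ p, Q.IsPath p → Q.src p ≠ Q.tgt p

/-- `Q` has no multiple arrows: distinct arrows never have both the same source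
and the same target. -/
def NoMultipleArrows : Prop :=
  ∀ a b : Q.A, Q.s a = Q.s b → Q.t a = Q.t b → a = b

/-- A bypass `(α, u)`: `u` is a path parallel to the arrow `α` and distinct from it. -/
def IsBypass (α : Q.A) (u : List Q.A) : Prop :=
  Q.IsPath u ∧ Q.src u = some (Q.s α) ∧ Q.tgt u = some (Q.t α) ∧ u ≠ [α]

/-- `Repl n u v` : `v` is obtained from `u` by replacing `n` of its arrows (at
increasing positions) by bypass paths. -/
inductive Repl : ℕ → List Q.A → List Q.A → Prop
  | nil : Repl 0 [] []
  | keep (a : Q.A) {n : ℕ} {u v : List Q.A} : Repl n u v → Repl n (a :: u) (a :: v)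
  | repl {a : Q.A} {p : List Q.A} {n : ℕ} {u v : List Q.A} :
      Q.IsBypass a p → Repl n u v → Repl (n + 1) (a :: u) (p ++ v)

/-- `v` is derived of `u` of order `t`. -/
def DerivedOfOrder (t : ℕ) (u v : List Q.A) : Prop := 1 ≤ t ∧ Q.Repl t u v

/-- `v` is derived of `u` (of some order `t ≥ 1`). -/
def Derived (u v : List Q.A) : Prop := ∃ t, Q.DerivedOfOrder t u v

/-- `W(α)` : the number of bypasses of the form `(α, u)`. -/
noncomputable def Wa (α : Q.A) : ℕ := Nat.card {u : List Q.A // Q.IsBypass α u}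

/-- `W(u)` for a path `u = α_n ⋯ α_1` : the sum of the `W(α_i)`. -/
noncomputable def Wp (u : List Q.A) : ℕ := (u.map Q.Wa).sum

/-- A linear order `<` on the nontrivial paths of `Q` refining the `W`-ordering and
compatible with concatenation, as in Le Meur's Definition 2.5. -/
structure PathOrder where
  lt : List Q.A → List Q.A → Prop
  irrefl : ∀ p, Q.IsPath p → ¬ lt p p
  trans' : ∀ p q r, lt p q → lt q r → lt p r
  total' : ∀ p q, Q.IsPath p → Q.IsPath q → p ≠ q → lt p q ∨ lt q p
  wlt : ∀ p q, Q.IsPath p → Q.IsPath q → Q.Wp p < Q.Wp q → lt p q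
  concat : ∀ u u' v v' : List Q.A, lt v u → lt v' u' →
    Q.IsPath (v ++ v') → Q.IsPath (u ++ u') → lt (v ++ v') (u ++ u')

end Basic

/-- Lexicographic (strict) order on bypasses: `(α,u) < (β,v)` iff `α < β`, or
`α = β` and `u < v`. -/
def PathOrder.bplt {Q : Quiv} (o : Q.PathOrder) (b c : Q.A × List Q.A) : Prop :=
  o.lt [b.1] [c.1] ∨ (b.1 = c.1 ∧ o.lt b.2 c.2)

/-- Lexicographic non-strict order on bypasses. -/
def PathOrder.bple {Q : Quiv} (o : Q.PathOrder) (b c : Q.A × List Q.A) : Prop :=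
  o.bplt b c ∨ b = c

section Linear

variable (Q : Quiv) (k : Type) [Field k]

/-- Concatenation product on the free `k`-module on lists of arrows (the morphism
spaces of the path category `kQ`). -/
noncomputable def mulF (f g : List Q.A →₀ k) : List Q.A →₀ k :=
  f.sum fun p c => g.sum fun q d => Finsupp.single (p ++ q) (c * d)

/-- Image of the arrow `a` under the transvection `φ_{α,u,τ}`. -/
noncomputable def arrowImg (α : Q.A) (u : List Q.A) (τ : k) (a : Q.A) : List Q.A →₀ k :=
  if a = α then Finsupp.single [a] 1 + τ • Finsupp.single u 1 else Finsupp.single [a] 1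

/-- Image of a path under the transvection `φ_{α,u,τ}`. -/
noncomputable def substPoly (α : Q.A) (u : List Q.A) (τ : k) : List Q.A → (List Q.A →₀ k)
  | [] => Finsupp.single [] 1
  | a :: rest => mulF Q k (arrowImg Q k α u τ a) (substPoly α u τ rest)

/-- The transvection `φ_{α,u,τ}` as a linear endomorphism of `kQ` : it is the
`k`-linear automorphism of `kQ` fixing every vertex, sending `α` to `α + τ u`, and
fixing every other arrow. -/
noncomputable def substMap (α : Q.A) (u : List Q.A) (τ : k) :
    Module.End k (List Q.A →₀ k) :=
  Finsupp.linearCombination k (substPoly Q k α u τ)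

/-- `ψ` lies in the group `T` generated by the transvections, i.e. it is a finite
product of transvections. -/
def MemT (ψ : Module.End k (List Q.A →₀ k)) : Prop :=
  ∃ L : List (Q.A × List Q.A × k),
    (∀ x ∈ L, Q.IsBypass x.1 x.2.1) ∧
    ψ = (L.map fun x => substMap Q k x.1 x.2.1 x.2.2).prod

/-- `r'` is a subexpression of `r`. -/
def Subexpr (r' r : List Q.A →₀ k) : Prop :=
  r'.support ⊆ r.support ∧ ∀ p ∈ r'.support, r' p = r p

/-- A minimal relation of `I` : a nonzero `r ∈ I` such that `0` and `r` are the only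
subexpressions of `r` lying in `I`. -/
def IsMinimalRel (I : Submodule k (List Q.A →₀ k)) (r : List Q.A →₀ k) : Prop :=
  r ∈ I ∧ r ≠ 0 ∧ ∀ r', Subexpr Q k r' r → r' ∈ I → r' = 0 ∨ r' = r

/-- `ReplExp g u v c` : `v` is obtained from the path `u` by replacing some of its
arrows `a` (at increasing positions) by paths `w ∈ supp(g a)`, `w ≠ a`, and `c` is
the product of the corresponding coefficients `w^*(g a)`. -/
inductive ReplExp (g : Q.A → (List Q.A →₀ k)) : List Q.A → List Q.A → k → Prop
  | nil : ReplExp g [] [] 1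
  | keep (a : Q.A) {u v : List Q.A} {c : k} :
      ReplExp g u v c → ReplExp g (a :: u) (a :: v) c
  | repl (a : Q.A) {w u v : List Q.A} {c : k} :
      w ∈ (g a).support → w ≠ [a] → ReplExp g u v c →
      ReplExp g (a :: u) (w ++ v) ((g a) w * c)

/-- The homotopy relation `∼_I` on walks. A walk is a list of pairs `(a, d)` where
`a` is an arrow and `d` is `true` for `a` and `false` for the formal inverse `a⁻¹`;
the relation is the smallest equivalence relation compatible with concatenation,
cancelling `a a⁻¹` and `a⁻¹ a`, and identifying any two paths lying in the support
of a minimal relation of `I`. -/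
inductive Homotopic (I : Submodule k (List Q.A →₀ k)) :
    List (Q.A × Bool) → List (Q.A × Bool) → Prop
  | refl (w : List (Q.A × Bool)) : Homotopic I w w
  | symm {w w' : List (Q.A × Bool)} : Homotopic I w w' → Homotopic I w' w
  | trans {w w' w'' : List (Q.A × Bool)} :
      Homotopic I w w' → Homotopic I w' w'' → Homotopic I w w''
  | cancel (a : Q.A) : Homotopic I [(a, true), (a, false)] []
  | cancel' (a : Q.A) : Homotopic I [(a, false), (a, true)] []
  | rel {r : List Q.A →₀ k} (hr : IsMinimalRel Q k I r) {u v : List Q.A}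
      (hu : u ∈ r.support) (hv : v ∈ r.support) :
      Homotopic I (u.map fun a => (a, true)) (v.map fun a => (a, true))
  | congr (w x : List (Q.A × Bool)) {v v' : List (Q.A × Bool)} :
      Homotopic I v v' → Homotopic I (w ++ v ++ x) (w ++ v' ++ x)

/-- `I` is a monomial admissible ideal of `kQ` : every element is a combination of
paths of length `≥ 2`, membership is detected on supports (monomiality), and `I`
is stable under concatenation with paths on either side. -/
def IsMonomialAdmissible (I : Submodule k (List Q.A →₀ k)) : Prop :=
  (∀ r ∈ I, ∀ p ∈ (r : List Q.A →₀ k).support, Q.IsPath p ∧ 2 ≤ p.length) ∧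
  (∀ r : List Q.A →₀ k, (∀ p ∈ r.support, Finsupp.single p (1 : k) ∈ I) → r ∈ I) ∧
  (∀ r ∈ I, ∀ p ∈ (r : List Q.A →₀ k).support, Finsupp.single p (1 : k) ∈ I) ∧
  (∀ p q : List Q.A, Q.IsPath p → Finsupp.single q (1 : k) ∈ I → Q.IsPath (p ++ q) →
    Finsupp.single (p ++ q) (1 : k) ∈ I) ∧
  (∀ p q : List Q.A, Finsupp.single p (1 : k) ∈ I → Q.IsPath q → Q.IsPath (p ++ q) →
    Finsupp.single (p ++ q) (1 : k) ∈ I)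

/-- A `k`-linear automorphism of `kQ` (fixing the vertices) is the transvection
`φ_{α,u,τ}` when its underlying linear map is `substMap α u τ`. -/
def IsTransvectionE (ψ : (List Q.A →₀ k) ≃ₗ[k] (List Q.A →₀ k))
    (α : Q.A) (u : List Q.A) (τ : k) : Prop :=
  (ψ : (List Q.A →₀ k) →ₗ[k] (List Q.A →₀ k)) = substMap Q k α u τ

/-- The subgroup `T_{<(α,u)}` generated by the transvections `φ_{β,v,τ}` with
`(β,v) < (α,u)`. -/
noncomputable def TltSub (o : Q.PathOrder) (b : Q.A × List Q.A) :
    Subgroup ((List Q.A →₀ k) ≃ₗ[k] (List Q.A →₀ k)) :=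
  Subgroup.closure
    {ψ | ∃ β v τ, Q.IsBypass β v ∧ o.bplt (β, v) b ∧ IsTransvectionE Q k ψ β v τ}

/-- The subgroup `T_{≤(α,u)}` generated by the transvections `φ_{β,v,τ}` with
`(β,v) ≤ (α,u)`. -/
noncomputable def TleSub (o : Q.PathOrder) (b : Q.A × List Q.A) :
    Subgroup ((List Q.A →₀ k) ≃ₗ[k] (List Q.A →₀ k)) :=
  Subgroup.closure
    {ψ | ∃ β v τ, Q.IsBypass β v ∧ o.bple (β, v) b ∧ IsTransvectionE Q k ψ β v τ}

/-- The set `T_{(α,u)} = {φ_{α,u,τ} | τ ∈ k}`. -/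
def TsingleSet (b : Q.A × List Q.A) :
    Set ((List Q.A →₀ k) ≃ₗ[k] (List Q.A →₀ k)) :=
  {ψ | ∃ τ : k, IsTransvectionE Q k ψ b.1 b.2 τ}

/-- `m` is the `<`-maximum of the support of `r`. -/
def IsMaxPath (o : Q.PathOrder) (r : List Q.A →₀ k) (m : List Q.A) : Prop :=
  m ∈ r.support ∧ ∀ p ∈ r.support, p ≠ m → o.lt p m

/-- `B` is the Gröbner basis of the subspace `F` with respect to the path order `o` :
`B` spans `F` and each `r ∈ B` has a leading path `m` (with coefficient `1`, all other
paths of `supp r` being `<`-smaller) whose coefficient in every other element of `B`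
vanishes. -/
def IsGB (o : Q.PathOrder) (F : Submodule k (List Q.A →₀ k))
    (B : Set (List Q.A →₀ k)) : Prop :=
  B ⊆ (F : Set (List Q.A →₀ k)) ∧ Submodule.span k B = F ∧
  ∀ r ∈ B, ∃ m, m ∈ (r : List Q.A →₀ k).support ∧ r m = 1 ∧
    (∀ p ∈ (r : List Q.A →₀ k).support, p ≠ m → o.lt p m) ∧
    ∀ r' ∈ B, r' ≠ r → (r' : List Q.A →₀ k) m = 0

end Linear


/-! ### Auxiliary development for Statement 19 -/

section Aux19

variable (Q : Quiv) (k : Type) [Field k]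

/-- The morphism space as a monoid algebra over the free monoid of arrows. -/
abbrev MA := MonoidAlgebra k (FreeMonoid Q.A)

/-- Identity coercion into the monoid algebra. -/
def toMA (f : List Q.A →₀ k) : MA Q k := MonoidAlgebra.ofCoeff f

lemma mulF_eq (f g : List Q.A →₀ k) : mulF Q k f g = (toMA Q k f * toMA Q k g).coeff := by
  rw [MonoidAlgebra.mul_def]
  simp only [MonoidAlgebra.coeff_finsuppSum, MonoidAlgebra.coeff_single]
  rfl

lemma ma_one : (1 : MA Q k).coeff = (Finsupp.single [] 1 : List Q.A →₀ k) := rfl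

lemma single_mul (p q : List Q.A) (c d : k) :
    mulF Q k (Finsupp.single p c) (Finsupp.single q d) = Finsupp.single (p ++ q) (c*d) := by
  rw [mulF_eq]
  exact congrArg MonoidAlgebra.coeff
    (MonoidAlgebra.single_mul_single (FreeMonoid.ofList p) (FreeMonoid.ofList q) c d)

lemma mulF_mem_support {f g : List Q.A →₀ k} {q : List Q.A}
    (h : q ∈ (mulF Q k f g).support) :
    ∃ x ∈ f.support, ∃ y ∈ g.support, x ++ y = q := by
  unfold mulF at h
  obtain ⟨x, hx, h1⟩ := Finset.mem_biUnion.mp (Finsupp.support_sum h)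
  obtain ⟨y, hy, h2⟩ := Finset.mem_biUnion.mp (Finsupp.support_sum h1)
  have h3 := Finsupp.support_single_subset h2
  rw [Finset.mem_singleton] at h3
  exact ⟨x, hx, y, hy, h3.symm⟩

lemma mulF_apply (f g : List Q.A →₀ k) (q : List Q.A) :
    mulF Q k f g q = f.sum fun x c => g.sum fun y d => if x ++ y = q then c * d else 0 := by
  unfold mulF
  rw [Finsupp.sum_apply]
  apply Finsupp.sum_congr
  intro x _
  rw [Finsupp.sum_apply]
  apply Finsupp.sum_congr
  intro y _
  rw [Finsupp.single_apply]

lemma mulF_apply_unique {f g : List Q.A →₀ k} {q x₀ y₀ : List Q.A} (hsplit : x₀ ++ y₀ = q)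
    (huniq : ∀ x ∈ f.support, ∀ y ∈ g.support, x ++ y = q → x = x₀ ∧ y = y₀) :
    mulF Q k f g q = f x₀ * g y₀ := by
  rw [mulF_apply]
  unfold Finsupp.sum
  rw [Finset.sum_eq_single x₀]
  · beta_reduce
    rw [Finset.sum_eq_single y₀]
    · rw [if_pos hsplit]
    · intro y hy hne
      beta_reduce
      by_cases hs : x₀ ∈ f.support
      · rw [if_neg]
        intro hc
        exact hne (huniq x₀ hs y hy hc).2
      · rw [Finsupp.notMem_support_iff.mp hs]
        split <;> ring
    · intro hy
      rw [Finsupp.notMem_support_iff.mp hy]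
      split <;> ring
  · intro x hx hne
    apply Finset.sum_eq_zero
    intro y hy
    beta_reduce
    rw [if_neg]
    intro hc
    exact hne (huniq x hx y hy hc).1
  · intro hx
    apply Finset.sum_eq_zero
    intro y hy
    beta_reduce
    rw [Finsupp.notMem_support_iff.mp hx]
    split <;> ring

lemma toMA_apply (f : List Q.A →₀ k) : (toMA Q k f).coeff = f := rfl

/-- Generalized substitution polynomial for a substitution system `g`. -/
noncomputable def subPoly (g : Q.A → (List Q.A →₀ k)) : List Q.A → (List Q.A →₀ k)
  | [] => Finsupp.single [] 1
  | a :: r => mulF Q k (g a) (subPoly g r)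

lemma subPoly_nil (g : Q.A → (List Q.A →₀ k)) : subPoly Q k g [] = Finsupp.single [] 1 := rfl

lemma subPoly_cons (g : Q.A → (List Q.A →₀ k)) (a : Q.A) (r : List Q.A) :
    subPoly Q k g (a :: r) = mulF Q k (g a) (subPoly Q k g r) := rfl

lemma subPoly_eq_prod (g : Q.A → (List Q.A →₀ k)) (l : List Q.A) :
    subPoly Q k g l = (l.map fun a => toMA Q k (g a)).prod.coeff := by
  induction l with
  | nil => rw [List.map_nil, List.prod_nil, subPoly_nil, ma_one]
  | cons a r ih =>
    rw [subPoly_cons, mulF_eq, ih, List.map_cons, List.prod_cons]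
    rfl

/-- The substitution endomorphism attached to `g`. -/
noncomputable def Sub (g : Q.A → (List Q.A →₀ k)) : Module.End k (List Q.A →₀ k) :=
  Finsupp.linearCombination k (subPoly Q k g)

/-- The substitution map as an algebra homomorphism. -/
noncomputable def SubA (g : Q.A → (List Q.A →₀ k)) : MA Q k →ₐ[k] MA Q k :=
  MonoidAlgebra.lift k (MA Q k) (FreeMonoid Q.A) (FreeMonoid.lift fun a => toMA Q k (g a))

lemma Sub_single (g : Q.A → (List Q.A →₀ k)) (l : List Q.A) (c : k) :
    Sub Q k g (Finsupp.single l c) = c • subPoly Q k g l := by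
  simp [Sub, Finsupp.linearCombination_single]

lemma SubA_single (g : Q.A → (List Q.A →₀ k)) (l : List Q.A) (c : k) :
    SubA Q k g (toMA Q k (Finsupp.single l c)) = toMA Q k (c • subPoly Q k g l) := by
  have h1 : toMA Q k (Finsupp.single l c) = MonoidAlgebra.single (FreeMonoid.ofList l) c := rfl
  rw [h1, SubA, MonoidAlgebra.lift_single, FreeMonoid.lift_apply, subPoly_eq_prod]
  rfl

lemma Sub_eq_SubA (g : Q.A → (List Q.A →₀ k)) (x : List Q.A →₀ k) :
    Sub Q k g x = (SubA Q k g (toMA Q k x)).coeff := by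
  induction x using Finsupp.induction_linear with
  | zero =>
    rw [map_zero]
    show 0 = (SubA Q k g 0).coeff
    rw [map_zero]
    rfl
  | add x y hx hy =>
    rw [map_add, hx, hy]
    show _ = (SubA Q k g (toMA Q k x + toMA Q k y)).coeff
    rw [map_add]
    rfl
  | single l c =>
    rw [Sub_single, SubA_single]
    rfl

lemma Sub_apply (g : Q.A → (List Q.A →₀ k)) (x : List Q.A →₀ k) :
    Sub Q k g x = x.sum fun l c => c • subPoly Q k g l := by
  rw [Sub, Finsupp.linearCombination_apply]

lemma subPoly_arrow (g : Q.A → (List Q.A →₀ k)) (a : Q.A) :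
    subPoly Q k g [a] = g a := by
  rw [subPoly_cons, subPoly_nil, mulF_eq]
  show (toMA Q k (g a) * 1).coeff = g a
  rw [mul_one]
  rfl

lemma subPoly_append (g : Q.A → (List Q.A →₀ k)) (l₁ l₂ : List Q.A) :
    subPoly Q k g (l₁ ++ l₂) = mulF Q k (subPoly Q k g l₁) (subPoly Q k g l₂) := by
  rw [mulF_eq]
  simp only [subPoly_eq_prod, List.map_append, List.prod_append]
  rfl

lemma Sub_comp (g₁ g₂ : Q.A → (List Q.A →₀ k)) :
    Sub Q k g₁ * Sub Q k g₂ = Sub Q k (fun a => Sub Q k g₁ (g₂ a)) := by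
  apply Finsupp.lhom_ext'
  intro l
  apply LinearMap.ext
  intro c
  show Sub Q k g₁ (Sub Q k g₂ (Finsupp.single l c)) = Sub Q k _ (Finsupp.single l c)
  rw [Sub_single, map_smul, Sub_single]
  congr 1
  rw [Sub_eq_SubA, subPoly_eq_prod]
  show (SubA Q k g₁ (List.map (fun a => toMA Q k (g₂ a)) l).prod).coeff = _
  rw [map_list_prod, subPoly_eq_prod, List.map_map]
  congr 1
  congr 1
  congr 1
  funext a
  show SubA Q k g₁ (toMA Q k (g₂ a)) = toMA Q k (Sub Q k g₁ (g₂ a))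
  rw [Sub_eq_SubA]
  rfl

lemma substPoly_eq (α : Q.A) (u : List Q.A) (τ : k) (l : List Q.A) :
    substPoly Q k α u τ l = subPoly Q k (arrowImg Q k α u τ) l := by
  induction l with
  | nil => rfl
  | cons a r ih => rw [substPoly, subPoly_cons, ih]

lemma substMap_eq (α : Q.A) (u : List Q.A) (τ : k) :
    substMap Q k α u τ = Sub Q k (arrowImg Q k α u τ) := by
  unfold substMap Sub
  congr 1
  funext l
  exact substPoly_eq Q k α u τ l

end Aux19

section Aux19b

variable (Q : Quiv) (k : Type) [Field k]

/-- Chain condition for (possibly empty) lists of arrows. -/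
def Wk (p : List Q.A) : Prop := p.Chain' (fun a b => Q.t a = Q.s b)

lemma isPath_iff (p : List Q.A) : Q.IsPath p ↔ p ≠ [] ∧ Wk Q p := Iff.rfl

lemma src_cons (a : Q.A) (l : List Q.A) : Q.src (a :: l) = some (Q.s a) := rfl

lemma src_nil : Q.src [] = none := rfl

lemma tgt_nil : Q.tgt [] = none := rfl

lemma tgt_singleton (a : Q.A) : Q.tgt [a] = some (Q.t a) := rfl

lemma src_eq_none_iff (l : List Q.A) : Q.src l = none ↔ l = [] := by
  cases l <;> simp [src]

lemma tgt_eq_none_iff (l : List Q.A) : Q.tgt l = none ↔ l = [] := by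
  cases l with
  | nil => simp [tgt]
  | cons a r => simp [tgt, List.getLast?_eq_none_iff]

lemma src_append_ne {w : List Q.A} (v : List Q.A) (hw : w ≠ []) :
    Q.src (w ++ v) = Q.src w := by
  unfold src
  rw [List.head?_append_of_ne_nil _ hw]

lemma tgt_append_ne (w : List Q.A) {v : List Q.A} (hv : v ≠ []) :
    Q.tgt (w ++ v) = Q.tgt v := by
  unfold tgt
  rw [List.getLast?_append_of_ne_nil _ hv]

lemma tgt_cons_ne (a : Q.A) {v : List Q.A} (hv : v ≠ []) :
    Q.tgt (a :: v) = Q.tgt v := by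
  rw [show a :: v = [a] ++ v from rfl, tgt_append_ne Q [a] hv]

/-- A good substitution system: diagonal coefficients 1, off-diagonal support
consisting of parallel paths of length at least 2. -/
def Good (g : Q.A → (List Q.A →₀ k)) : Prop :=
  ∀ a, (g a) [a] = 1 ∧ ∀ w ∈ (g a).support, w ≠ [a] →
    (Q.IsPath w ∧ Q.src w = some (Q.s a) ∧ Q.tgt w = some (Q.t a) ∧ 2 ≤ w.length)

lemma Good.diag {g : Q.A → (List Q.A →₀ k)} (hg : Good Q k g) (a : Q.A) : (g a) [a] = 1 :=
  (hg a).1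

lemma Good.elem {g : Q.A → (List Q.A →₀ k)} (hg : Good Q k g) {a : Q.A} {w : List Q.A}
    (hw : w ∈ (g a).support) (hne : w ≠ [a]) :
    Q.IsPath w ∧ Q.src w = some (Q.s a) ∧ Q.tgt w = some (Q.t a) ∧ 2 ≤ w.length :=
  (hg a).2 w hw hne

/-- Main structural lemma on replacement expansion: preserves chains, endpoints,
and weakly increases length. -/
lemma re_chain {g : Q.A → (List Q.A →₀ k)} (hg : Good Q k g) :
    ∀ {l q : List Q.A} {c : k}, ReplExp Q k g l q c → Wk Q l →
      Wk Q q ∧ Q.src q = Q.src l ∧ Q.tgt q = Q.tgt l ∧ l.length ≤ q.length := by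
  intro l q c h
  induction h with
  | nil => exact fun _ => ⟨List.isChain_nil, rfl, rfl, le_refl _⟩
  | keep a h ih =>
    rename_i u v _
    intro hl
    rw [Wk, List.Chain', List.isChain_cons] at hl
    obtain ⟨hlink, hu⟩ := hl
    obtain ⟨hv, hsrc, htgt, hlen⟩ := ih hu
    refine ⟨?_, rfl, ?_, by simpa using hlen⟩
    · rw [Wk, List.Chain', List.isChain_cons]
      refine ⟨?_, hv⟩
      intro y hy
      have : Q.src v = some (Q.s y) := by
        unfold src
        rw [show v.head? = some y from hy]
        rfl
      rw [hsrc] at this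
      cases hu' : u.head? with
      | none =>
        exfalso
        unfold src at this
        rw [hu'] at this
        simp at this
      | some y' =>
        have h1 : Q.src u = some (Q.s y') := by unfold src; rw [hu']; rfl
        rw [h1] at this
        have h2 : Q.s y' = Q.s y := Option.some.inj this
        rw [← h2]
        exact hlink y' hu'
    · by_cases hv0 : v = []
      · subst hv0
        have hu0 : u = [] := by
          rw [← tgt_eq_none_iff (Q := Q), ← htgt, tgt_nil]
        subst hu0
        rfl
      · have hu0 : u ≠ [] := by
          intro hu0
          subst hu0
          rw [tgt_nil, tgt_eq_none_iff] at htgt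
          exact hv0 htgt
        rw [tgt_cons_ne Q a hv0, tgt_cons_ne Q a hu0]
        exact htgt
  | repl a hw hne h ih =>
    rename_i w u v _
    intro hl
    rw [Wk, List.Chain', List.isChain_cons] at hl
    obtain ⟨hlink, hu⟩ := hl
    obtain ⟨hv, hsrc, htgt, hlen⟩ := ih hu
    obtain ⟨⟨hwne, hwch⟩, hwsrc, hwtgt, hwlen⟩ := hg.elem Q k hw hne
    refine ⟨?_, ?_, ?_, ?_⟩
    · rw [Wk, List.Chain', List.isChain_append]
      refine ⟨hwch, hv, ?_⟩
      intro x hx y hy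
      have hx' : Q.tgt w = some (Q.t x) := by
        unfold tgt
        rw [show w.getLast? = some x from hx]
        rfl
      rw [hwtgt] at hx'
      have htx : Q.t x = Q.t a := (Option.some.inj hx').symm 
      have hsy : Q.src v = some (Q.s y) := by
        unfold src
        rw [show v.head? = some y from hy]
        rfl
      rw [hsrc] at hsy
      cases hu' : u.head? with
      | none =>
        exfalso
        unfold src at hsy
        rw [hu'] at hsy
        simp at hsy
      | some y' =>
        have h1 : Q.src u = some (Q.s y') := by unfold src; rw [hu']; rfl
        rw [h1] at hsy
        have h2 : Q.s y' = Q.s y := Option.some.inj hsy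
        rw [htx, ← h2]
        exact hlink y' hu'
    · rw [src_append_ne Q v hwne, hwsrc]
      rfl
    · by_cases hv0 : v = []
      · subst hv0
        have hu0 : u = [] := by
          rw [← tgt_eq_none_iff (Q := Q), ← htgt, tgt_nil]
        subst hu0
        rw [List.append_nil, hwtgt, tgt_singleton]
      · have hu0 : u ≠ [] := by
          intro hu0
          subst hu0
          rw [tgt_nil, tgt_eq_none_iff] at htgt
          exact hv0 htgt
        rw [tgt_append_ne Q w hv0, tgt_cons_ne Q a hu0]
        exact htgt
    · rw [List.length_append, List.length_cons]
      have : 1 ≤ w.length := by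
        cases w
        · exact absurd rfl hwne
        · simp
      omega

lemma re_len {g : Q.A → (List Q.A →₀ k)} (hg : Good Q k g) :
    ∀ {l q : List Q.A} {c : k}, ReplExp Q k g l q c → l.length ≤ q.length := by
  intro l q c h
  induction h with
  | nil => exact le_refl _
  | keep a h ih => simpa using ih
  | repl a hw hne h ih =>
    rename_i w u v _
    have hwl := (hg.elem Q k hw hne).2.2.2
    rw [List.length_append, List.length_cons]
    omega

lemma re_len_eq {g : Q.A → (List Q.A →₀ k)} (hg : Good Q k g) :
    ∀ {l q : List Q.A} {c : k}, ReplExp Q k g l q c → q.length = l.length → q = l := by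
  intro l q c h
  induction h with
  | nil => intro _; rfl
  | keep a h ih =>
    intro hlen
    rw [List.length_cons, List.length_cons] at hlen
    rw [ih (by omega)]
  | repl a hw hne h ih =>
    rename_i w u v _
    intro hlen
    exfalso
    have hwl := (hg.elem Q k hw hne).2.2.2
    have := re_len Q k hg h
    rw [List.length_append, List.length_cons] at hlen
    omega

lemma re_c_ne {g : Q.A → (List Q.A →₀ k)} :
    ∀ {l q : List Q.A} {c : k}, ReplExp Q k g l q c → c ≠ 0 := by
  intro l q c h
  induction h with
  | nil => exact one_ne_zero
  | keep a h ih => exact ih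
  | repl a hw hne h ih =>
    exact mul_ne_zero (Finsupp.mem_support_iff.mp hw) ih

lemma re_refl (g : Q.A → (List Q.A →₀ k)) : ∀ l : List Q.A, ReplExp Q k g l l 1 := by
  intro l
  induction l with
  | nil => exact .nil
  | cons a r ih => exact .keep a ih

lemma re_prepend {g : Q.A → (List Q.A →₀ k)} {u v : List Q.A} {c : k}
    (h : ReplExp Q k g u v c) : ∀ w : List Q.A, ReplExp Q k g (w ++ u) (w ++ v) c := by
  intro w
  induction w with
  | nil => exact h
  | cons a r ih => exact .keep a ih

lemma re_supp {g : Q.A → (List Q.A →₀ k)} :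
    ∀ {l q : List Q.A}, q ∈ (subPoly Q k g l).support → ∃ c, c ≠ 0 ∧ ReplExp Q k g l q c := by
  intro l
  induction l with
  | nil =>
    intro q hq
    rw [subPoly_nil, Finsupp.support_single_ne_zero _ one_ne_zero] at hq
    rw [Finset.mem_singleton] at hq
    subst hq
    exact ⟨1, one_ne_zero, .nil⟩
  | cons a r ih =>
    intro q hq
    rw [subPoly_cons] at hq
    obtain ⟨x, hx, y, hy, hxy⟩ := mulF_mem_support Q k hq
    obtain ⟨c, hc, hd⟩ := ih hy
    by_cases hxa : x = [a]
    · subst hxa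
      subst hxy
      exact ⟨c, hc, .keep a hd⟩
    · subst hxy
      exact ⟨(g a) x * c, mul_ne_zero (Finsupp.mem_support_iff.mp hx) hc, .repl a hx hxa hd⟩

end Aux19b

section Aux19c

variable (Q : Quiv) (k : Type) [Field k]

/-- A nonempty chain glued after a nonempty chain with the same target yields a cycle. -/
lemma tail_cycle (hnc : Q.NoCycle) {w y : List Q.A} (hwy : Wk Q (w ++ y))
    (hw : w ≠ []) (hy : y ≠ []) (ht : Q.tgt w = Q.tgt (w ++ y)) : False := by
  rw [Wk, List.Chain', List.isChain_append] at hwy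
  obtain ⟨hwch, hych, hlink⟩ := hwy
  apply hnc y ⟨hy, hych⟩
  -- src y = tgt y
  obtain ⟨b, hb⟩ : ∃ b, y.head? = some b := by
    cases y with
    | nil => exact absurd rfl hy
    | cons b r => exact ⟨b, rfl⟩
  obtain ⟨a, ha⟩ : ∃ a, w.getLast? = some a := by
    cases hw' : w.getLast? with
    | none => exact absurd (List.getLast?_eq_none_iff.mp hw') hw
    | some a => exact ⟨a, rfl⟩
  have h1 : Q.t a = Q.s b := hlink a ha b hb
  have h2 : Q.src y = some (Q.s b) := by unfold src; rw [hb]; rfl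
  have h3 : Q.tgt w = some (Q.t a) := by unfold tgt; rw [ha]; rfl
  have h4 : Q.tgt y = Q.tgt w := by
    rw [ht, tgt_append_ne Q w hy]
  rw [h2, h4, h3, h1]

/-- Support elements of a good substitution system at a fixed arrow are mutually
prefix-free (no cancellation). -/
lemma prefix_free_aux (hnc : Q.NoCycle) {g : Q.A → (List Q.A →₀ k)} (hg : Good Q k g)
    {a : Q.A} {x₁ x₂ y₁ y₂ : List Q.A} (h₁ : x₁ ∈ (g a).support) (h₂ : x₂ ∈ (g a).support)
    (he : x₁ ++ y₁ = x₂ ++ y₂) (hle : x₁.length ≤ x₂.length) : x₁ = x₂ := by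
  have hpre : x₁ <+: x₂ :=
    List.prefix_of_prefix_length_le ⟨y₁, he⟩ (x₂.prefix_append y₂) hle
  obtain ⟨z, hz⟩ := hpre
  by_cases hz0 : z = []
  · rw [hz0, List.append_nil] at hz
    exact hz
  exfalso
  -- x₂ = x₁ ++ z with z ≠ []
  by_cases hx₂a : x₂ = [a]
  · -- then x₁ = [a] (length ≤ 1 and in support) — impossible since z ≠ []
    subst hx₂a
    by_cases hx₁a : x₁ = [a]
    · subst hx₁a
      rw [show ([a] : List Q.A) = [a] ++ [] from rfl] at hz
      exact hz0 (List.append_cancel_left hz)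
    · have hlen := (hg.elem Q k h₁ hx₁a).2.2.2
      have hlz := congrArg List.length hz
      rw [List.length_append] at hlz
      simp at hlz
      omega
  · obtain ⟨⟨hx₂ne, hx₂ch⟩, hx₂src, hx₂tgt, hx₂len⟩ := hg.elem Q k h₂ hx₂a
    by_cases hx₁a : x₁ = [a]
    · subst hx₁a
      apply tail_cycle Q hnc (w := [a]) (y := z) _ (by simp) hz0
      · rw [hz, tgt_singleton, hx₂tgt]
      · rw [Wk, hz]
        exact hx₂ch
    · obtain ⟨⟨hx₁ne, _⟩, _, hx₁tgt, _⟩ := hg.elem Q k h₁ hx₁a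
      apply tail_cycle Q hnc (w := x₁) (y := z) _ hx₁ne hz0
      · rw [hz, hx₁tgt, hx₂tgt]
      · rw [Wk, hz]
        exact hx₂ch

lemma prefix_free (hnc : Q.NoCycle) {g : Q.A → (List Q.A →₀ k)} (hg : Good Q k g)
    {a : Q.A} {x₁ x₂ y₁ y₂ : List Q.A} (h₁ : x₁ ∈ (g a).support) (h₂ : x₂ ∈ (g a).support)
    (he : x₁ ++ y₁ = x₂ ++ y₂) : x₁ = x₂ ∧ y₁ = y₂ := by
  have hx : x₁ = x₂ := by
    rcases le_total x₁.length x₂.length with hle | hle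
    · exact prefix_free_aux Q k hnc hg h₁ h₂ he hle
    · exact (prefix_free_aux Q k hnc hg h₂ h₁ he.symm hle).symm
  subst hx
  exact ⟨rfl, List.append_cancel_left he⟩

/-- Coefficient formula: the coefficient of a replacement of `l` in `subPoly g l`
is exactly the product of the replacement coefficients. -/
lemma re_coeff (hnc : Q.NoCycle) {g : Q.A → (List Q.A →₀ k)} (hg : Good Q k g) :
    ∀ {l q : List Q.A} {c : k}, ReplExp Q k g l q c → (subPoly Q k g l) q = c := by
  intro l q c h
  induction h with
  | nil => rw [subPoly_nil]; exact Finsupp.single_eq_same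
  | keep a h ih =>
    rename_i u v _
    have hdiag : [a] ∈ (g a).support := by
      rw [Finsupp.mem_support_iff, hg.diag]
      exact one_ne_zero
    have huniq : ∀ x ∈ (g a).support, ∀ y ∈ (subPoly Q k g u).support,
        x ++ y = a :: v → x = [a] ∧ y = v := by
      intro x hx y hy hxy
      exact prefix_free Q k hnc hg hx hdiag (hxy.trans rfl)
    rw [subPoly_cons,
      mulF_apply_unique Q k (show ([a] : List Q.A) ++ v = a :: v from rfl) huniq,
      hg.diag, ih, one_mul]
  | repl a hw hne h ih =>
    rename_i w u v _
    have huniq : ∀ x ∈ (g a).support, ∀ y ∈ (subPoly Q k g u).support,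
        x ++ y = w ++ v → x = w ∧ y = v := by
      intro x hx y hy hxy
      exact prefix_free Q k hnc hg hx hw hxy
    rw [subPoly_cons, mulF_apply_unique Q k rfl huniq, ih]

end Aux19c

section Aux19d

variable (Q : Quiv) (k : Type) [Field k]

/-- The identity substitution system. -/
noncomputable def gid : Q.A → (List Q.A →₀ k) := fun a => Finsupp.single [a] 1

lemma subPoly_gid (l : List Q.A) : subPoly Q k (gid Q k) l = Finsupp.single l 1 := by
  induction l with
  | nil => rfl
  | cons a r ih =>
    rw [subPoly_cons, gid, ih, single_mul, one_mul]
    rfl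

lemma Sub_gid : Sub Q k (gid Q k) = 1 := by
  apply Finsupp.lhom_ext'
  intro l
  apply LinearMap.ext
  intro c
  show Sub Q k (gid Q k) (Finsupp.single l c) = Finsupp.single l c
  rw [Sub_single, subPoly_gid, Finsupp.smul_single', mul_one]

lemma Good_gid : Good Q k (gid Q k) := by
  intro a
  constructor
  · exact Finsupp.single_eq_same
  · intro w hw hne
    exfalso
    apply hne
    have := Finsupp.support_single_subset hw
    rwa [Finset.mem_singleton] at this

lemma Good_arrowImg (hnm : Q.NoMultipleArrows) {α : Q.A} {u : List Q.A} (τ : k)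
    (hb : Q.IsBypass α u) : Good Q k (arrowImg Q k α u τ) := by
  intro a
  obtain ⟨hup, husrc, hutgt, hune⟩ := hb
  constructor
  · unfold arrowImg
    split
    · rename_i ha
      subst ha
      rw [Finsupp.add_apply, Finsupp.smul_apply, Finsupp.single_eq_same,
        Finsupp.single_apply, if_neg, smul_zero, add_zero]
      intro h
      exact hune h
    · exact Finsupp.single_eq_same
  · intro w hw hne
    unfold arrowImg at hw
    split at hw
    · rename_i ha
      subst ha
      have := Finsupp.support_add hw
      rw [Finset.mem_union] at this
      rcases this with h | h
      · exfalso
        apply hne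
        have := Finsupp.support_single_subset h
        rwa [Finset.mem_singleton] at this
      · have := Finsupp.support_smul h
        have hwu : w = u := by
          have h2 := Finsupp.support_single_subset this
          rwa [Finset.mem_singleton] at h2
        subst hwu
        refine ⟨hup, husrc, hutgt, ?_⟩
        rcases w with _ | ⟨b, r⟩
        · exact absurd rfl hup.1
        · rcases r with _ | ⟨b', r'⟩
          · exfalso
            apply hune
            have h1 : Q.s b = Q.s a := Option.some.inj husrc
            have h2 : Q.t b = Q.t a := Option.some.inj hutgt
            rw [hnm b a h1 h2]
          · simp
    · exfalso
      apply hne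
      have := Finsupp.support_single_subset hw
      rwa [Finset.mem_singleton] at this

lemma Sub_support {g : Q.A → (List Q.A →₀ k)} (x : List Q.A →₀ k) :
    (Sub Q k g x).support ⊆ x.support.biUnion fun l => (subPoly Q k g l).support := by
  rw [Sub_apply]
  intro q hq
  have := Finsupp.support_sum hq
  rw [Finset.mem_biUnion] at this ⊢
  obtain ⟨l, hl, hql⟩ := this
  exact ⟨l, hl, Finsupp.support_smul hql⟩

lemma Good_comp {g₁ g₂ : Q.A → (List Q.A →₀ k)} (hg₁ : Good Q k g₁) (hg₂ : Good Q k g₂) :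
    Good Q k (fun a => Sub Q k g₁ (g₂ a)) := by
  intro a
  constructor
  · show (Sub Q k g₁ (g₂ a)) [a] = 1
    rw [Sub_apply, Finsupp.sum_apply]
    unfold Finsupp.sum
    rw [Finset.sum_eq_single [a]]
    · beta_reduce
      rw [Finsupp.smul_apply, subPoly_arrow, hg₂.diag, hg₁.diag, smul_eq_mul, mul_one]
    · intro w hw hne
      beta_reduce
      rw [Finsupp.smul_apply]
      have h0 : (subPoly Q k g₁ w) [a] = 0 := by
        rw [← Finsupp.notMem_support_iff]
        intro hmem
        obtain ⟨c, _, hd⟩ := re_supp Q k hmem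
        have h1 := re_len Q k hg₁ hd
        have h2 := (hg₂.elem Q k hw hne).2.2.2
        simp at h1
        omega
      rw [h0, smul_zero]
    · intro hmem
      exfalso
      rw [Finsupp.notMem_support_iff, hg₂.diag] at hmem
      exact one_ne_zero hmem
  · intro w' hw' hne'
    have := Sub_support Q k (g := g₁) (g₂ a) hw'
    rw [Finset.mem_biUnion] at this
    obtain ⟨w, hw, hw'mem⟩ := this
    by_cases hwa : w = [a]
    · subst hwa
      rw [subPoly_arrow] at hw'mem
      exact hg₁.elem Q k hw'mem hne'
    · obtain ⟨⟨hwne, hwch⟩, hwsrc, hwtgt, hwlen⟩ := hg₂.elem Q k hw hwa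
      obtain ⟨c, _, hd⟩ := re_supp Q k hw'mem
      obtain ⟨hch, hsrc, htgt, hlen⟩ := re_chain Q k hg₁ hd hwch
      refine ⟨⟨?_, hch⟩, by rw [hsrc, hwsrc], by rw [htgt, hwtgt], by omega⟩
      intro h0
      subst h0
      simp only [List.length_nil] at hlen
      omega

lemma memT_good (hnm : Q.NoMultipleArrows) {ψ : Module.End k (List Q.A →₀ k)}
    (hψ : MemT Q k ψ) : ∃ g, Good Q k g ∧ ψ = Sub Q k g := by
  obtain ⟨L, hL, hψ⟩ := hψ
  induction L generalizing ψ with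
  | nil =>
    refine ⟨gid Q k, Good_gid Q k, ?_⟩
    rw [hψ, List.map_nil, List.prod_nil, Sub_gid]
  | cons x L ih =>
    obtain ⟨g', hg', hψ'⟩ := ih (fun y hy => hL y (List.mem_cons_of_mem x hy)) rfl
    refine ⟨fun a => Sub Q k (arrowImg Q k x.1 x.2.1 x.2.2) (g' a), ?_, ?_⟩
    · exact Good_comp Q k (Good_arrowImg Q k hnm x.2.2 (hL x (List.mem_cons_self))) hg'
    · rw [hψ, List.map_cons, List.prod_cons, hψ', substMap_eq, Sub_comp]

lemma good_rep {ψ : Module.End k (List Q.A →₀ k)} {g : Q.A → (List Q.A →₀ k)}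
    (hψ : ψ = Sub Q k g) (a : Q.A) : ψ (Finsupp.single [a] 1) = g a := by
  rw [hψ, Sub_single, subPoly_arrow, one_smul]

end Aux19d

section Aux19e

variable (Q : Quiv) (k : Type) [Field k]

/-- The walk associated with a path. -/
def pt (p : List Q.A) : List (Q.A × Bool) := p.map fun a => (a, true)

/-- The inverse walk associated with a path. -/
def iw (p : List Q.A) : List (Q.A × Bool) := (p.map fun a => (a, false)).reverse

lemma pt_nil : pt Q ([] : List Q.A) = [] := rfl

lemma pt_cons (a : Q.A) (r : List Q.A) : pt Q (a :: r) = (a, true) :: pt Q r := rfl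

lemma pt_append (p q : List Q.A) : pt Q (p ++ q) = pt Q p ++ pt Q q := by
  unfold pt; rw [List.map_append]

variable (I : Submodule k (List Q.A →₀ k))

lemma hK1 : ∀ w : List Q.A, Homotopic Q k I (pt Q w ++ iw Q w) [] := by
  intro w
  induction w with
  | nil => exact .refl []
  | cons a r ih =>
    have h1 := Homotopic.congr (I := I) [(a, true)] [(a, false)] ih
    have e1 : pt Q (a :: r) ++ iw Q (a :: r)
        = [(a, true)] ++ (pt Q r ++ iw Q r) ++ [(a, false)] := by
      unfold pt iw
      simp [List.append_assoc]
    rw [e1]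
    refine h1.trans ?_
    have : [(a, true)] ++ ([] : List (Q.A × Bool)) ++ [(a, false)]
        = [(a, true), (a, false)] := rfl
    rw [this]
    exact .cancel a

lemma hK2 : ∀ w : List Q.A, Homotopic Q k I (iw Q w ++ pt Q w) [] := by
  intro w
  induction w with
  | nil => exact .refl []
  | cons a r ih =>
    have h1 := Homotopic.congr (I := I) (iw Q r) (pt Q r) (Homotopic.cancel' (I := I) a)
    have e1 : iw Q (a :: r) ++ pt Q (a :: r)
        = iw Q r ++ [(a, false), (a, true)] ++ pt Q r := by
      unfold pt iw
      simp [List.append_assoc]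
    rw [e1]
    refine h1.trans ?_
    have : iw Q r ++ ([] : List (Q.A × Bool)) ++ pt Q r = iw Q r ++ pt Q r := by
      rw [List.append_nil]
    rw [this]
    exact ih

lemma conj_left {X Y : List (Q.A × Bool)} (w : List Q.A)
    (H : Homotopic Q k I (pt Q w ++ X) (pt Q w ++ Y)) : Homotopic Q k I X Y := by
  have e1 : Homotopic Q k I (iw Q w ++ (pt Q w ++ X)) X := by
    have := Homotopic.congr (I := I) [] X (hK2 Q k I w)
    have h2 : Homotopic Q k I ((iw Q w ++ pt Q w) ++ X) X := this
    rwa [List.append_assoc] at h2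
  have e1' : Homotopic Q k I (iw Q w ++ (pt Q w ++ Y)) Y := by
    have := Homotopic.congr (I := I) [] Y (hK2 Q k I w)
    have h2 : Homotopic Q k I ((iw Q w ++ pt Q w) ++ Y) Y := this
    rwa [List.append_assoc] at h2
  have e2 : Homotopic Q k I (iw Q w ++ (pt Q w ++ X)) (iw Q w ++ (pt Q w ++ Y)) := by
    have := Homotopic.congr (I := I) (iw Q w) [] H
    rwa [List.append_nil, List.append_nil] at this
  exact (e1.symm.trans e2).trans e1'

lemma conj_right {X Y : List (Q.A × Bool)} (w : List Q.A)
    (H : Homotopic Q k I (X ++ pt Q w) (Y ++ pt Q w)) : Homotopic Q k I X Y := by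
  have e1 : Homotopic Q k I ((X ++ pt Q w) ++ iw Q w) X := by
    have := Homotopic.congr (I := I) X [] (hK1 Q k I w)
    simp only [List.append_nil] at this
    rwa [← List.append_assoc] at this
  have e1' : Homotopic Q k I ((Y ++ pt Q w) ++ iw Q w) Y := by
    have := Homotopic.congr (I := I) Y [] (hK1 Q k I w)
    simp only [List.append_nil] at this
    rwa [← List.append_assoc] at this
  have e2 : Homotopic Q k I ((X ++ pt Q w) ++ iw Q w) ((Y ++ pt Q w) ++ iw Q w) := by
    have := Homotopic.congr (I := I) [] (iw Q w) H
    exact this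
  exact (e1.symm.trans e2).trans e1'

/-- Conjugation: a homotopy of paths differing by one bypass replacement yields a
homotopy of the bypass itself. -/
lemma conj_bypass {w₁ w₂ v : List Q.A} {β : Q.A}
    (H : Homotopic Q k I (pt Q (w₁ ++ [β] ++ w₂)) (pt Q (w₁ ++ v ++ w₂))) :
    Homotopic Q k I [(β, true)] (pt Q v) := by
  rw [pt_append, pt_append, pt_append, pt_append] at H
  have H2 : Homotopic Q k I (pt Q w₁ ++ pt Q [β]) (pt Q w₁ ++ pt Q v) := by
    apply conj_right Q k I w₂
    exact H
  exact conj_left Q k I w₁ H2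

lemma prepend_walk {X Y : List (Q.A × Bool)} (a : Q.A)
    (H : Homotopic Q k I X Y) : Homotopic Q k I ((a, true) :: X) ((a, true) :: Y) := by
  have := Homotopic.congr (I := I) [(a, true)] [] H
  rwa [List.append_nil, List.append_nil] at this

/-- Replacement along homotopic bypasses of bounded length preserves homotopy class. -/
lemma re_homotopic {g : Q.A → (List Q.A →₀ k)} (hg : Good Q k g) (D : ℕ)
    (hyp : ∀ a w, w ∈ (g a).support → w ≠ [a] → w.length ≤ D + 1 →
      Homotopic Q k I [(a, true)] (pt Q w)) :
    ∀ {l q : List Q.A} {c : k}, ReplExp Q k g l q c → q.length ≤ l.length + D →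
      Homotopic Q k I (pt Q l) (pt Q q) := by
  intro l q c h
  induction h with
  | nil => intro _; exact .refl []
  | keep a h ih =>
    rename_i u v _
    intro hlen
    rw [List.length_cons, List.length_cons] at hlen
    have h1 := ih (by omega)
    rw [pt_cons, pt_cons]
    exact prepend_walk Q k I a h1
  | repl a hw hne h ih =>
    rename_i w u v _
    intro hlen
    rw [List.length_append, List.length_cons] at hlen
    have hwne : w ≠ [] := (hg.elem Q k hw hne).1.1
    have hw1 : 1 ≤ w.length := by
      cases w
      · exact absurd rfl hwne
      · simp
    have huv := re_len Q k hg h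
    have h1 := ih (by omega)
    have h3 := hyp a w hw hne (by omega)
    have h4 : Homotopic Q k I ((a, true) :: pt Q v) (pt Q w ++ pt Q v) := by
      have := Homotopic.congr (I := I) [] (pt Q v) h3
      exact this
    rw [pt_cons, pt_append]
    exact (prepend_walk Q k I a h1).trans h4

end Aux19e

section Aux19f

variable (Q : Quiv) (k : Type) [Field k]

lemma subexpr_self (r : List Q.A →₀ k) : Subexpr Q k r r :=
  ⟨subset_rfl, fun _ _ => rfl⟩

lemma subexpr_trans {r'' r' r : List Q.A →₀ k} (h1 : Subexpr Q k r'' r')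
    (h2 : Subexpr Q k r' r) : Subexpr Q k r'' r :=
  ⟨h1.1.trans h2.1, fun p hp => (h1.2 p hp).trans (h2.2 p (h1.1 hp))⟩

lemma subexpr_eq_of_support {r' r : List Q.A →₀ k} (h : Subexpr Q k r' r)
    (hsupp : r.support ⊆ r'.support) : r' = r := by
  ext p
  by_cases hp : p ∈ r'.support
  · exact h.2 p hp
  · rw [Finsupp.notMem_support_iff.mp hp]
    have : p ∉ r.support := fun hc => hp (hsupp hc)
    rw [Finsupp.notMem_support_iff.mp this]

lemma subexpr_sub {r' r : List Q.A →₀ k} (h : Subexpr Q k r' r) :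
    Subexpr Q k (r - r') r ∧ (r - r').support = r.support \ r'.support := by
  have hval : ∀ p, (r - r') p = if p ∈ r'.support then 0 else r p := by
    intro p
    rw [Finsupp.sub_apply]
    split
    · rename_i hp
      rw [h.2 p hp, sub_self]
    · rename_i hp
      rw [Finsupp.notMem_support_iff.mp hp, sub_zero]
  have hsupp : (r - r').support = r.support \ r'.support := by
    ext p
    rw [Finsupp.mem_support_iff, Finset.mem_sdiff, Finsupp.mem_support_iff, hval]
    split
    · rename_i hp
      simp [hp]
    · rename_i hp
      simp [hp]
  refine ⟨⟨?_, ?_⟩, hsupp⟩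
  · rw [hsupp]
    exact Finset.sdiff_subset
  · intro p hp
    rw [hsupp, Finset.mem_sdiff] at hp
    rw [hval, if_neg hp.2]

lemma exists_minimal_rel {I : Submodule k (List Q.A →₀ k)} :
    ∀ (n : ℕ) (r : List Q.A →₀ k), r.support.card ≤ n → r ∈ I → r ≠ 0 →
      ∃ r₁, Subexpr Q k r₁ r ∧ IsMinimalRel Q k I r₁ := by
  intro n
  induction n with
  | zero =>
    intro r hcard hr hne
    exfalso
    apply hne
    rw [← Finsupp.support_eq_empty, ← Finset.card_eq_zero]
    omega
  | succ n ih =>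
    intro r hcard hr hne
    by_cases hmin : ∀ r', Subexpr Q k r' r → r' ∈ I → r' = 0 ∨ r' = r
    · exact ⟨r, subexpr_self Q k r, hr, hne, hmin⟩
    · push_neg at hmin
      obtain ⟨r', hsub, hrI, hne0, hner⟩ := hmin
      have hlt : r'.support.card < r.support.card := by
        apply Finset.card_lt_card
        rw [Finset.ssubset_iff_subset_ne]
        refine ⟨hsub.1, ?_⟩
        intro hc
        exact hner (subexpr_eq_of_support Q k hsub (le_of_eq hc.symm))
      obtain ⟨r₁, hs, hm⟩ := ih r' (by omega) hrI hne0
      exact ⟨r₁, subexpr_trans Q k hs hsub, hm⟩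

/-- Homogeneity of ideals along homotopy classes. -/
lemma homog {I : Submodule k (List Q.A →₀ k)} (q₀ : List Q.A) :
    ∀ (n : ℕ) (r : List Q.A →₀ k), r.support.card ≤ n → r ∈ I →
      (r.filter fun q => Homotopic Q k I (pt Q q) (pt Q q₀)) ∈ I := by
  intro n
  induction n with
  | zero =>
    intro r hcard hr
    have : r = 0 := by
      rw [← Finsupp.support_eq_empty, ← Finset.card_eq_zero]
      omega
    subst this
    rw [Finsupp.filter_zero]
    exact zero_mem I
  | succ n ih =>
    intro r hcard hr
    by_cases hne : r = 0
    · subst hne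
      rw [Finsupp.filter_zero]
      exact zero_mem I
    · obtain ⟨r₁, hsub, hm⟩ := exists_minimal_rel Q k (n + 1) r hcard hr hne
      have hr₁I := hm.1
      have hr₁ne := hm.2.1
      have hr₂I : r - r₁ ∈ I := sub_mem hr hr₁I
      obtain ⟨hsub₂, hsupp₂⟩ := subexpr_sub Q k hsub
      have hone : 1 ≤ r₁.support.card := by
        rw [Nat.one_le_iff_ne_zero]
        intro hc
        rw [Finset.card_eq_zero, Finsupp.support_eq_empty] at hc
        exact hr₁ne hc
      have hcard₂ : (r - r₁).support.card ≤ n := by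
        rw [hsupp₂, Finset.card_sdiff_of_subset hsub.1]
        have := Finset.card_mono hsub.1
        omega
      have h₂ := ih (r - r₁) hcard₂ hr₂I
      have hdecomp : r = r₁ + (r - r₁) := by abel
      have hfil : r.filter (fun q => Homotopic Q k I (pt Q q) (pt Q q₀))
          = r₁.filter (fun q => Homotopic Q k I (pt Q q) (pt Q q₀))
            + (r - r₁).filter (fun q => Homotopic Q k I (pt Q q) (pt Q q₀)) := by
        rw [← Finsupp.filter_add]
        rw [← hdecomp]
      rw [hfil]
      apply add_mem _ h₂
      -- the filtered minimal relation is 0 or r₁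
      obtain ⟨x₀, hx₀⟩ : ∃ x₀, x₀ ∈ r₁.support := by
        by_contra hc
        push_neg at hc
        apply hr₁ne
        ext p
        exact Finsupp.notMem_support_iff.mp (hc p)
      by_cases hhom : Homotopic Q k I (pt Q x₀) (pt Q q₀)
      · have : r₁.filter (fun q => Homotopic Q k I (pt Q q) (pt Q q₀)) = r₁ := by
          rw [Finsupp.filter_eq_self_iff]
          intro q hq
          have hrel : Homotopic Q k I (pt Q q) (pt Q x₀) :=
            Homotopic.rel hm (Finsupp.mem_support_iff.mpr hq) hx₀
          exact hrel.trans hhom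
        rw [this]
        exact hr₁I
      · have : r₁.filter (fun q => Homotopic Q k I (pt Q q) (pt Q q₀)) = 0 := by
          ext p
          rw [Finsupp.filter_apply]
          split
          · rename_i hp
            rw [Finsupp.coe_zero, Pi.zero_apply, ← Finsupp.notMem_support_iff]
            intro hpmem
            apply hhom
            have hrel : Homotopic Q k I (pt Q x₀) (pt Q p) := Homotopic.rel hm hx₀ hpmem
            exact hrel.trans hp
          · rfl
        rw [this]
        exact zero_mem I

end Aux19f

section Aux19g

variable (Q : Quiv) (k : Type) [Field k]

lemma Sub_coeff (g : Q.A → (List Q.A →₀ k)) (x : List Q.A →₀ k) (q : List Q.A) :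
    Sub Q k g x q = x.sum fun p c => c * (subPoly Q k g p) q := by
  rw [Sub_apply, Finsupp.sum_apply]
  apply Finsupp.sum_congr
  intro p _
  rw [Finsupp.smul_apply, smul_eq_mul]

/-- Minimal-length support elements of elements of `Sub g '' I₀` come from `I₀`. -/
lemma minlen (hnc : Q.NoCycle) {g : Q.A → (List Q.A →₀ k)} (hg : Good Q k g)
    {I₀ : Submodule k (List Q.A →₀ k)} (hI₀ : IsMonomialAdmissible Q k I₀)
    {x : List Q.A →₀ k} (hx : x ∈ I₀) {q : List Q.A} (hq : q ∈ (Sub Q k g x).support)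
    (hminl : ∀ q' ∈ (Sub Q k g x).support, q.length ≤ q'.length) :
    Finsupp.single q (1:k) ∈ I₀ := by
  have hP : ∀ p ∈ x.support, Finsupp.single p (1:k) ∈ I₀ := hI₀.2.2.1 x hx
  -- q comes from some support element of x
  obtain ⟨pb, hpb, hqpb⟩ : ∃ p ∈ x.support, q ∈ (subPoly Q k g p).support := by
    have := Sub_support Q k x hq
    rw [Finset.mem_biUnion] at this
    exact this
  obtain ⟨cq, _, hdq⟩ := re_supp Q k hqpb
  have hlen1 : pb.length ≤ q.length := re_len Q k hg hdq
  -- minimal length element of x.support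
  obtain ⟨ph, hph, hph2⟩ := Finset.exists_min_image x.support List.length ⟨pb, hpb⟩
  -- the coefficient of ph in Sub g x is x ph
  have hcoeff : Sub Q k g x ph = x ph := by
    rw [Sub_coeff]
    unfold Finsupp.sum
    rw [Finset.sum_eq_single ph]
    · beta_reduce
      rw [re_coeff Q k hnc hg (re_refl Q k g ph), mul_one]
    · intro p hp hne
      beta_reduce
      have h0 : (subPoly Q k g p) ph = 0 := by
        rw [← Finsupp.notMem_support_iff]
        intro hmem
        obtain ⟨c, _, hd⟩ := re_supp Q k hmem
        have h1 := re_len Q k hg hd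
        have h2 := hph2 p hp
        exact hne (re_len_eq Q k hg hd (by omega)).symm
      rw [h0, mul_zero]
    · intro hmem
      exact absurd hph hmem
  have hphmem : ph ∈ (Sub Q k g x).support := by
    rw [Finsupp.mem_support_iff, hcoeff]
    exact Finsupp.mem_support_iff.mp hph
  have hlen2 : q.length ≤ ph.length := hminl ph hphmem
  have hlen3 : ph.length ≤ pb.length := hph2 pb hpb
  have heq : q = pb := re_len_eq Q k hg hdq (by omega)
  subst heq
  exact hP q hpb

lemma arrowImg_supp {β : Q.A} {v : List Q.A} {τ : k} {a : Q.A} {w : List Q.A}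
    (hw : w ∈ (arrowImg Q k β v τ a).support) : w = [a] ∨ (a = β ∧ w = v) := by
  unfold arrowImg at hw
  split at hw
  · rename_i ha
    have := Finsupp.support_add hw
    rw [Finset.mem_union] at this
    rcases this with h | h
    · left
      have := Finsupp.support_single_subset h
      rw [Finset.mem_singleton] at this
      rw [this, ha]
    · right
      have := Finsupp.support_smul h
      have h2 := Finsupp.support_single_subset this
      rw [Finset.mem_singleton] at h2
      exact ⟨ha, h2⟩
  · left
    have := Finsupp.support_single_subset hw
    rwa [Finset.mem_singleton] at this

lemma not_mem_bypass (hnc : Q.NoCycle) {β : Q.A} {v : List Q.A} (hb : Q.IsBypass β v) :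
    β ∉ v := by
  intro hmem
  obtain ⟨y₁, y₂, hy⟩ := List.append_of_mem hmem
  obtain ⟨⟨hvne, hvch⟩, hvsrc, hvtgt, hvneq⟩ := hb
  subst hy
  rcases y₁ with _ | ⟨b, r⟩
  · -- v = β :: y₂ with y₂ ≠ []
    have hy₂ : y₂ ≠ [] := by
      intro h
      subst h
      exact hvneq rfl
    have hvtgt' : Q.tgt (β :: y₂) = some (Q.t β) := by
      rw [List.nil_append] at hvtgt
      exact hvtgt
    have hvch' : Wk Q ([β] ++ y₂) := by
      rw [List.nil_append] at hvch
      exact hvch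
    apply tail_cycle Q hnc (w := [β]) (y := y₂) hvch' (by simp) hy₂
    rw [tgt_singleton]
    exact (show Q.tgt ([β] ++ y₂) = some (Q.t β) from hvtgt').symm
  · -- y₁ = b :: r nonempty prefix ending at s β : cycle on y₁
    have h1 : Wk Q ((b :: r) ++ (β :: y₂)) := hvch
    rw [Wk, List.Chain', List.isChain_append] at h1
    obtain ⟨hch1, _, hlink⟩ := h1
    apply hnc (b :: r) ⟨by simp, hch1⟩
    -- src (b::r) = some (s b) ; need tgt (b::r) = some (s β)
    obtain ⟨a', ha'⟩ : ∃ a', (b :: r).getLast? = some a' := by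
      cases h : (b :: r).getLast? with
      | none => exact absurd (List.getLast?_eq_none_iff.mp h) (by simp)
      | some a' => exact ⟨a', rfl⟩
    have h3 : Q.t a' = Q.s β := hlink a' ha' β rfl
    have h4 : Q.tgt (b :: r) = some (Q.t a') := by unfold tgt; rw [ha']; rfl
    have h5 : Q.src (b :: r) = some (Q.s b) := rfl
    rw [h4, h5, h3]
    -- s b = s β since src v = some (s β)
    have h6 : Q.src ((b :: r) ++ (β :: y₂)) = some (Q.s b) := by
      rw [src_append_ne Q _ (by simp)]
      rfl
    rw [hvsrc] at h6
    have h7 : Q.s β = Q.s b := Option.some.inj h6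
    rw [h7]

lemma subPoly_fix {β : Q.A} {v : List Q.A} {τ : k} :
    ∀ {l : List Q.A}, β ∉ l → subPoly Q k (arrowImg Q k β v τ) l = Finsupp.single l 1 := by
  intro l
  induction l with
  | nil => intro _; rfl
  | cons a r ih =>
    intro hmem
    have ha : a ≠ β := fun h => hmem (by rw [h]; exact List.mem_cons_self)
    have hr : β ∉ r := fun h => hmem (List.mem_cons_of_mem a h)
    rw [subPoly_cons, ih hr]
    unfold arrowImg
    rw [if_neg ha, single_mul, one_mul]
    rfl

lemma arrowImg_self (β : Q.A) (v : List Q.A) (τ : k) :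
    arrowImg Q k β v τ β = Finsupp.single [β] 1 + τ • Finsupp.single v 1 := by
  unfold arrowImg
  rw [if_pos rfl]

lemma arrowImg_other {β a : Q.A} (v : List Q.A) (τ : k) (ha : a ≠ β) :
    arrowImg Q k β v τ a = Finsupp.single [a] 1 := by
  unfold arrowImg
  rw [if_neg ha]

lemma substMap_inv (hnc : Q.NoCycle) {β : Q.A} {v : List Q.A} (hb : Q.IsBypass β v) :
    substMap Q k β v 1 * substMap Q k β v (-1) = 1 := by
  rw [substMap_eq, substMap_eq, Sub_comp]
  have hcomp : (fun a => Sub Q k (arrowImg Q k β v 1) (arrowImg Q k β v (-1) a)) = gid Q k := by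
    funext a
    by_cases ha : a = β
    · rw [ha]
      show Sub Q k (arrowImg Q k β v 1) (arrowImg Q k β v (-1) β) = gid Q k β
      rw [arrowImg_self, map_add, map_smul, Sub_single, Sub_single, one_smul, one_smul,
        subPoly_arrow, subPoly_fix Q k (not_mem_bypass Q hnc hb), arrowImg_self, gid]
      rw [one_smul, neg_one_smul]
      abel
    · show Sub Q k (arrowImg Q k β v 1) (arrowImg Q k β v (-1) a) = gid Q k a
      rw [arrowImg_other Q k v (-1) ha, Sub_single, one_smul, subPoly_arrow,
        arrowImg_other Q k v 1 ha]
      rfl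
  rw [hcomp, Sub_gid]

lemma repl_closure {β : Q.A} {v : List Q.A} {τ : k} {I₀ : Submodule k (List Q.A →₀ k)}
    (hcls : ∀ w₁ w₂ : List Q.A, Finsupp.single (w₁ ++ [β] ++ w₂) (1:k) ∈ I₀ →
      Finsupp.single (w₁ ++ v ++ w₂) (1:k) ∈ I₀) :
    ∀ {l q : List Q.A} {c : k}, ReplExp Q k (arrowImg Q k β v τ) l q c →
      ∀ w : List Q.A, Finsupp.single (w ++ l) (1:k) ∈ I₀ →
        Finsupp.single (w ++ q) (1:k) ∈ I₀ := by
  intro l q c h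
  induction h with
  | nil => intro w hw; exact hw
  | keep a h ih =>
    rename_i u v' _
    intro w hw
    have h1 : w ++ a :: u = (w ++ [a]) ++ u := by rw [List.append_assoc]; rfl
    have h2 : w ++ a :: v' = (w ++ [a]) ++ v' := by rw [List.append_assoc]; rfl
    rw [h2]
    apply ih (w ++ [a])
    rw [← h1]
    exact hw
  | repl a hw0 hne h ih =>
    rename_i w' u v' _
    intro w hw
    rcases arrowImg_supp Q k hw0 with h1 | ⟨h1, h2⟩
    · exact absurd h1 hne
    · rw [h1] at hw
      have hstep : Finsupp.single (w ++ w' ++ u) (1:k) ∈ I₀ := by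
        rw [h2]
        apply hcls w u
        have : w ++ [β] ++ u = w ++ β :: u := by rw [List.append_assoc]; rfl
        rw [this]
        exact hw
      have h3 : w ++ (w' ++ v') = (w ++ w') ++ v' := by rw [List.append_assoc]
      rw [h3]
      apply ih (w ++ w')
      exact hstep

lemma esc (hnc : Q.NoCycle) {β : Q.A} {v : List Q.A} (hb : Q.IsBypass β v)
    {I₀ : Submodule k (List Q.A →₀ k)} (hI₀ : IsMonomialAdmissible Q k I₀)
    (hne1 : Submodule.map (substMap Q k β v 1) I₀ ≠ I₀) :
    ∃ w₁ w₂ : List Q.A, Finsupp.single (w₁ ++ [β] ++ w₂) (1:k) ∈ I₀ ∧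
      Finsupp.single (w₁ ++ v ++ w₂) (1:k) ∉ I₀ := by
  by_contra hc
  push_neg at hc
  have hsub : ∀ τ : k, Submodule.map (substMap Q k β v τ) I₀ ≤ I₀ := by
    intro τ
    rintro y ⟨x, hx, rfl⟩
    rw [substMap_eq, Sub_apply]
    apply Submodule.sum_mem
    intro p hp
    apply Submodule.smul_mem
    apply hI₀.2.1
    intro q hqs
    obtain ⟨c, _, hd⟩ := re_supp Q k hqs
    have := repl_closure Q k hc hd [] (hI₀.2.2.1 x hx p hp)
    exact this
  apply hne1
  apply le_antisymm (hsub 1)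
  intro y hy
  refine ⟨substMap Q k β v (-1) y, hsub (-1) ⟨y, hy, rfl⟩, ?_⟩
  rw [← Module.End.mul_apply, substMap_inv Q k hnc hb, Module.End.one_apply]

end Aux19g

section Aux19h

variable (Q : Quiv) (k : Type) [Field k]

/-- Main induction: every supported bypass of a good substitution system presenting
`I` from the monomial ideal `I₀` minimally is homotopically trivial. -/
lemma main_ind (hnc : Q.NoCycle) {g : Q.A → (List Q.A →₀ k)} (hg : Good Q k g)
    {I₀ I : Submodule k (List Q.A →₀ k)} (hI₀ : IsMonomialAdmissible Q k I₀)
    (hmap : Submodule.map (Sub Q k g) I₀ = I)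
    (hmin' : ∀ β v', Q.IsBypass β v' → v' ∈ (g β).support →
      Submodule.map (substMap Q k β v' 1) I₀ ≠ I₀) :
    ∀ (d : ℕ) (β : Q.A) (v : List Q.A), Q.IsBypass β v → v ∈ (g β).support →
      v.length ≤ d + 1 → Homotopic Q k I [(β, true)] (pt Q v) := by
  intro d
  induction d with
  | zero =>
    intro β v hb hv hlen
    exfalso
    have h2 := (hg.elem Q k hv hb.2.2.2).2.2.2
    omega
  | succ d ih =>
    intro β v hb hv hlen
    obtain ⟨w₁, w₂, hp₀, hq₀⟩ := esc Q k hnc hb hI₀ (hmin' β v hb hv)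
    have ep : w₁ ++ [β] ++ w₂ = w₁ ++ β :: w₂ := by rw [List.append_assoc]; rfl
    have eq0 : w₁ ++ v ++ w₂ = w₁ ++ (v ++ w₂) := List.append_assoc _ _ _
    -- the element r = subPoly g p₀ of I
    have hrI : subPoly Q k g (w₁ ++ [β] ++ w₂) ∈ I := by
      rw [← hmap]
      exact ⟨Finsupp.single (w₁ ++ [β] ++ w₂) 1, hp₀, by rw [Sub_single, one_smul]⟩
    -- the coefficient of q₀ in r is nonzero
    have hd₀ : ReplExp Q k g (w₁ ++ [β] ++ w₂) (w₁ ++ v ++ w₂) ((g β) v * 1) := by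
      rw [ep, eq0]
      exact re_prepend Q k (ReplExp.repl β hv hb.2.2.2 (re_refl Q k g w₂)) w₁
    have hq₀mem : (w₁ ++ v ++ w₂) ∈ (subPoly Q k g (w₁ ++ [β] ++ w₂)).support := by
      rw [Finsupp.mem_support_iff, re_coeff Q k hnc hg hd₀]
      exact mul_ne_zero (Finsupp.mem_support_iff.mp hv) one_ne_zero
    -- homotopy class component
    set pred := fun q => Homotopic Q k I (pt Q q) (pt Q (w₁ ++ v ++ w₂)) with hpred
    have hrC : (subPoly Q k g (w₁ ++ [β] ++ w₂)).filter pred ∈ I :=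
      homog Q k (w₁ ++ v ++ w₂) _ _ le_rfl hrI
    have hq₀C : (w₁ ++ v ++ w₂) ∈ ((subPoly Q k g (w₁ ++ [β] ++ w₂)).filter pred).support := by
      rw [Finsupp.support_filter, Finset.mem_filter]
      exact ⟨hq₀mem, .refl _⟩
    -- minimal length element of the component
    obtain ⟨q₁, hq₁mem, hq₁min⟩ := Finset.exists_min_image
      ((subPoly Q k g (w₁ ++ [β] ++ w₂)).filter pred).support List.length ⟨_, hq₀C⟩
    -- the component comes from I₀
    have hrC' : (subPoly Q k g (w₁ ++ [β] ++ w₂)).filter pred ∈ Submodule.map (Sub Q k g) I₀ := by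
      rw [hmap]; exact hrC
    obtain ⟨x, hxI₀, hxeq⟩ := Submodule.mem_map.mp hrC'
    have hq₁P : Finsupp.single q₁ (1:k) ∈ I₀ := by
      apply minlen Q k hnc hg hI₀ hxI₀ (q := q₁) (by rw [hxeq]; exact hq₁mem)
      intro q' hq'
      exact hq₁min q' (by rwa [← hxeq])
    -- q₀ is strictly longer than q₁
    have hlt : q₁.length < (w₁ ++ v ++ w₂).length := by
      by_contra hge
      push_neg at hge
      apply hq₀
      apply minlen Q k hnc hg hI₀ hxI₀ (q := w₁ ++ v ++ w₂) (by rw [hxeq]; exact hq₀C)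
      intro q' hq'
      exact le_trans hge (hq₁min q' (by rwa [← hxeq]))
    -- q₁ is a replacement of p₀
    have hq₁r : q₁ ∈ (subPoly Q k g (w₁ ++ [β] ++ w₂)).support := by
      have := hq₁mem
      rw [Finsupp.support_filter, Finset.mem_filter] at this
      exact this.1
    have hq₁pred : pred q₁ := by
      have := hq₁mem
      rw [Finsupp.support_filter, Finset.mem_filter] at this
      exact this.2
    obtain ⟨c₁, hc₁, hd₁⟩ := re_supp Q k hq₁r
    -- length bound for the replacement homotopy
    have hlenb : q₁.length ≤ (w₁ ++ [β] ++ w₂).length + d := by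
      have l1 : (w₁ ++ v ++ w₂).length = w₁.length + v.length + w₂.length := by
        simp [List.length_append]
        omega
      have l2 : (w₁ ++ [β] ++ w₂).length = w₁.length + 1 + w₂.length := by
        simp [List.length_append]
        omega
      have hv2 := (hg.elem Q k hv hb.2.2.2).2.2.2
      omega
    have hRH : Homotopic Q k I (pt Q (w₁ ++ [β] ++ w₂)) (pt Q q₁) := by
      apply re_homotopic Q k I hg d ?hyp hd₁ hlenb
      case hyp =>
        intro a w hw hne hwlen
        have hbw : Q.IsBypass a w := by
          obtain ⟨h1, h2, h3, _⟩ := hg.elem Q k hw hne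
          exact ⟨h1, h2, h3, hne⟩
        exact ih a w hbw hw hwlen
    exact conj_bypass Q k I (hRH.trans hq₁pred)

end Aux19h

/-- Let `I = φ(I_0)` for some `φ ∈ T`, and let `ψ ∈ T` satisfy
(1) `ψ(I_0) = I` and (2) for every bypass `(β,v)` with `v ∈ supp(ψ(β))` and every
`τ ∈ k^*`, `φ_{β,v,τ}(I_0) ≠ I_0`.  Then for every bypass `(α,u)`, if
`u ∈ supp(ψ(α))` then `α ∼_I u`, where `∼_I` is the homotopy relation of `(Q,I)`. -/
theorem stmt_19 (Q : Quiv) [Fintype Q.V] [Fintype Q.A]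
    (k : Type) [Field k] [IsAlgClosed k]
    (hnc : Q.NoCycle) (hnm : Q.NoMultipleArrows)
    (I₀ : Submodule k (List Q.A →₀ k)) (hI₀ : IsMonomialAdmissible Q k I₀)
    (I : Submodule k (List Q.A →₀ k))
    (hI : ∃ φ : Module.End k (List Q.A →₀ k), MemT Q k φ ∧ Submodule.map φ I₀ = I)
    (ψ : Module.End k (List Q.A →₀ k)) (hψ : MemT Q k ψ)
    (hψI : Submodule.map ψ I₀ = I)
    (hmin : ∀ (β : Q.A) (v : List Q.A), Q.IsBypass β v →
      v ∈ (ψ (Finsupp.single [β] (1 : k))).support →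
      ∀ τ : k, τ ≠ 0 → Submodule.map (substMap Q k β v τ) I₀ ≠ I₀)
    (α : Q.A) (u : List Q.A) (hαu : Q.IsBypass α u)
    (hu : u ∈ (ψ (Finsupp.single [α] (1 : k))).support) :
    Homotopic Q k I [(α, true)] (u.map fun a => (a, true)) := by
  obtain ⟨g, hg, hψg⟩ := memT_good Q k hnm hψ
  have hrep : ∀ a, ψ (Finsupp.single [a] 1) = g a := good_rep Q k hψg
  have hu' : u ∈ (g α).support := by rw [← hrep α]; exact hu
  have hmin' : ∀ β v', Q.IsBypass β v' → v' ∈ (g β).support →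
      Submodule.map (substMap Q k β v' 1) I₀ ≠ I₀ := by
    intro β v' hb hv'
    exact hmin β v' hb (by rw [hrep β]; exact hv') 1 one_ne_zero
  have hmap : Submodule.map (Sub Q k g) I₀ = I := by rw [← hψg]; exact hψI
  exact main_ind Q k hnc hg hI₀ hmap hmin' u.length α u hαu hu' (by omega)

end Quiv
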